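/- For symmetric strictly positive definite real matrices A and B that commute (A·B = B·A), exp(log A + log B) = A·B, where log A is defined by applying the scalar logarithm to the eigenvalues of A in a spectral decomposition. -/

import Mathlib

open Matrix Polynomial

/-! `log A` is `p(A)` for a polynomial `p` interpolating `log` at the eigenvalues of `A`, so it
commutes with every matrix commuting with `A`. Hence `log A` and `log B` commute, and
`exp (log A + log B) = exp (log A) * exp (log B) = A * B`, the last step because the eigenvalues of
a positive definite matrix are positive. -/

theorem Polynomial.aeval_units_conj {R A : Type*} [CommSemiring R] [Ring A] [Algebra R A]
    (u : Aˣ) (a : A) (p : R[X]) : aeval (↑u * a * ↑u⁻¹) p = ↑u * aeval a p * ↑u⁻¹ := by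
  simpa [ConjAct.units_smul_def] using
    aeval_algHom_apply (MulSemiringAction.toAlgHom R A (ConjAct.toConjAct u)) a p

theorem Commute.aeval_aeval {R A : Type*} [CommSemiring R] [Semiring A] [Algebra R A]
    {a b : A} (h : Commute a b) (p q : R[X]) : Commute (aeval a p) (aeval b q) := by
  have hb : Commute a (aeval b q) :=
    Algebra.commute_of_mem_adjoin_singleton_of_commute (aeval_mem_adjoin_singleton R b) h
  exact (Algebra.commute_of_mem_adjoin_singleton_of_commute
    (aeval_mem_adjoin_singleton R a) hb.symm).symm

namespace Matrix

variable {m : Type*} [Fintype m] [DecidableEq m]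

theorem aeval_diagonal {R : Type*} [CommSemiring R] (d : m → R) (p : R[X]) :
    aeval (diagonal d) p = diagonal fun i => p.eval (d i) := by
  rw [← diagonalAlgHom_apply R, aeval_algHom_apply, aeval_pi_apply]
  simp [coe_aeval_eq_eval]

theorem exists_aeval_diagonal_eq {K : Type*} [Field K] (d : m → K) (f : K → K) :
    ∃ p : K[X], aeval (diagonal d) p = diagonal fun i => f (d i) := by
  classical
  refine ⟨Lagrange.interpolate (Finset.univ.image d) id f, ?_⟩
  rw [aeval_diagonal]
  congr with i
  exact Lagrange.eval_interpolate_at_node f (Set.injOn_id _)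
    (Finset.mem_image_of_mem d (Finset.mem_univ i))

abbrev unitOfMulTransposeEqOne {R : Type*} [CommRing R] {U : Matrix m m R} (hU : U * Uᵀ = 1) :
    (Matrix m m R)ˣ :=
  ⟨U, Uᵀ, hU, mul_eq_one_comm.mp hU⟩

theorem exists_aeval_mul_diagonal_mul_transpose_eq {K : Type*} [Field K] {U : Matrix m m K}
    (hU : U * Uᵀ = 1) (d : m → K) (f : K → K) :
    ∃ p : K[X], aeval (U * diagonal d * Uᵀ) p = U * diagonal (fun i => f (d i)) * Uᵀ := by
  obtain ⟨p, hp⟩ := exists_aeval_diagonal_eq d f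
  refine ⟨p, ?_⟩
  have := aeval_units_conj (unitOfMulTransposeEqOne hU) (diagonal d) p
  rwa [hp] at this

theorem exp_mul_diagonal_log_mul_transpose {U : Matrix m m ℝ} (hU : U * Uᵀ = 1) {d : m → ℝ}
    (hd : ∀ i, 0 < d i) :
    NormedSpace.exp (U * diagonal (fun i => Real.log (d i)) * Uᵀ) = U * diagonal d * Uᵀ := by
  have hexp : NormedSpace.exp (fun i => Real.log (d i)) = d := by
    funext i
    rw [Pi.exp_def, ← Real.exp_eq_exp_ℝ]
    exact Real.exp_log (hd i)
  have := exp_units_conj (unitOfMulTransposeEqOne hU) (diagonal fun i => Real.log (d i))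
  rwa [exp_diagonal, hexp] at this

theorem PosDef.pos_of_eq_mul_diagonal_mul_transpose {A U : Matrix m m ℝ} {d : m → ℝ}
    (hA : A.PosDef) (hU : U * Uᵀ = 1) (hAd : A = U * diagonal d * Uᵀ) (i : m) : 0 < d i := by
  have hUU : Uᵀ * U = 1 := mul_eq_one_comm.mp hU
  have hd : diagonal d = Uᴴ * A * U := by
    rw [conjTranspose_eq_transpose_of_trivial, hAd]
    simp only [Matrix.mul_assoc, hUU, Matrix.mul_one]
    rw [← Matrix.mul_assoc, hUU, Matrix.one_mul]
  have hinj : Function.Injective U.mulVec := fun x y hxy => by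
    simpa [mulVec_mulVec, hUU] using congrArg (Uᵀ *ᵥ ·) hxy
  exact posDef_diagonal_iff.mp (hd ▸ hA.conjTranspose_mul_mul_same hinj) i

end Matrix

theorem exp_log_add_log_eq_mul_of_posDef_commute_general
    (n : ℕ) (A B LA LB : Matrix (Fin n) (Fin n) ℝ)
    (hA : A.PosDef) (hB : B.PosDef)
    (UA : Matrix (Fin n) (Fin n) ℝ) (dA : Fin n → ℝ)
    (hUA : UA * UAᵀ = 1)
    (hAdec : A = UA * Matrix.diagonal dA * UAᵀ)
    (hLA : LA = UA * Matrix.diagonal (fun i => Real.log (dA i)) * UAᵀ)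
    (UB : Matrix (Fin n) (Fin n) ℝ) (dB : Fin n → ℝ)
    (hUB : UB * UBᵀ = 1)
    (hBdec : B = UB * Matrix.diagonal dB * UBᵀ)
    (hLB : LB = UB * Matrix.diagonal (fun i => Real.log (dB i)) * UBᵀ)
    (hcomm : A * B = B * A) :
    NormedSpace.exp (LA + LB) = A * B := by
  obtain ⟨p, hp⟩ := exists_aeval_mul_diagonal_mul_transpose_eq hUA dA Real.log
  obtain ⟨q, hq⟩ := exists_aeval_mul_diagonal_mul_transpose_eq hUB dB Real.log
  have hL : Commute LA LB := by
    rw [hLA, hLB, ← hp, ← hq, ← hAdec, ← hBdec]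
    exact Commute.aeval_aeval hcomm p q
  rw [Matrix.exp_add_of_commute _ _ hL, hLA, hLB,
    exp_mul_diagonal_log_mul_transpose hUA (hA.pos_of_eq_mul_diagonal_mul_transpose hUA hAdec),
    exp_mul_diagonal_log_mul_transpose hUB (hB.pos_of_eq_mul_diagonal_mul_transpose hUB hBdec),
    ← hAdec, ← hBdec]

/-- For symmetric strictly positive definite real matrices `A` and `B` that commute,
`exp (log A + log B) = A * B`, where `log A` is defined by applying the scalar
logarithm to the eigenvalues in a spectral decomposition `A = U diag(λ) Uᵀ`. -/
theorem exp_log_add_log_eq_mul_of_posDef_commute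
    (n : ℕ) (A B LA LB : Matrix (Fin n) (Fin n) ℝ)
    (hAsymm : A.IsSymm) (hBsymm : B.IsSymm)
    (hA : A.PosDef) (hB : B.PosDef)
    (UA : Matrix (Fin n) (Fin n) ℝ) (dA : Fin n → ℝ)
    (hUA : UA * UAᵀ = 1)
    (hAdec : A = UA * Matrix.diagonal dA * UAᵀ)
    (hLA : LA = UA * Matrix.diagonal (fun i => Real.log (dA i)) * UAᵀ)
    (UB : Matrix (Fin n) (Fin n) ℝ) (dB : Fin n → ℝ)
    (hUB : UB * UBᵀ = 1)
    (hBdec : B = UB * Matrix.diagonal dB * UBᵀ)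
    (hLB : LB = UB * Matrix.diagonal (fun i => Real.log (dB i)) * UBᵀ)
    (hcomm : A * B = B * A) :
    NormedSpace.exp (LA + LB) = A * B :=
  exp_log_add_log_eq_mul_of_posDef_commute_general n A B LA LB hA hB UA dA hUA hAdec hLA UB dB hUB
    hBdec hLB hcomm
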